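/- arXiv:2411.03567 — 3 statements merged into one kernel-verified Lean document; each statement's English description precedes it below -/
import Mathlib

section
/- Let G be a finite simple graph with adjacency matrix A_G over ℚ, and let u be a vertex of G. Let A_{G−u} denote the adjacency matrix of the induced subgraph of G on the vertex set V(G) \ {u}. Then, in the ring ℚ⟦t⟧ of formal power series, (∑_{d≥0} w_d^u · t^d) · det(1 − t·A_G) = det(1 − t·A_{G−u}), where w_d^u is the number of closed walks of length d at u in G (so w_0^u = 1), and det(1 − t·M) denotes the determinant of the matrix 1 − t·M with entries in ℚ⟦t⟧. -/
/-!
Over `R⟦t⟧` the matrix `1 - t A` is invertible, with inverse `∑ Aᵈ tᵈ`, whose `(u, u)` entry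
counts closed walks at `u` when `A` is an adjacency matrix. Multiplying this inverse by
`det (1 - t A)` gives the adjugate, and the diagonal `(u, u)` entry of the adjugate is the
principal minor obtained by deleting row and column `u`, i.e. `det (1 - t A_{G-u})`.
-/

open Matrix PowerSeries

namespace Matrix

variable {n R : Type*} [Fintype n] [DecidableEq n] [CommRing R]

theorem adjugate_apply_self_eq_det_submatrix (M : Matrix n n R) (u : n) :
    M.adjugate u u =
      (M.submatrix (fun v : {v : n // v ≠ u} => (v : n))
        (fun v : {v : n // v ≠ u} => (v : n))).det := by
  -- Splitting `n` as `{u} ⊕ {v ≠ u}`, the matrix `M'` is block lower triangular with corner `1`.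
  set M' := M.updateRow u (Pi.single u 1)
  let e : {v : n // v = u} ⊕ {v : n // v ≠ u} ≃ n := Equiv.sumCompl (· = u)
  rw [adjugate_apply, ← det_submatrix_equiv_self e, ← fromBlocks_toBlocks (M'.submatrix e e)]
  have h₁₂ : (M'.submatrix e e).toBlocks₁₂ = 0 := by
    ext ⟨v, rfl⟩ ⟨w, hw⟩
    simp [e, M', Ne.symm hw, toBlocks₁₂]
  have h₁₁ : (M'.submatrix e e).toBlocks₁₁.det = 1 := by
    have : Subsingleton {v : n // v = u} := ⟨fun a b => Subtype.ext (a.2.trans b.2.symm)⟩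
    rw [det_eq_elem_of_subsingleton _ ⟨u, rfl⟩]
    simp [toBlocks₁₁, e, M']
  rw [h₁₂, det_fromBlocks_zero₁₂, h₁₁, one_mul]
  congr 1
  ext ⟨v, hv⟩ ⟨w, hw⟩
  simp [toBlocks₂₂, e, M', updateRow_apply, hv]

def geomPowerSeries (A : Matrix n n R) : Matrix n n R⟦X⟧ :=
  of fun i j => mk fun d => (A ^ d) i j

@[simp]
theorem coeff_geomPowerSeries_apply (A : Matrix n n R) (i j : n) (d : ℕ) :
    coeff d (A.geomPowerSeries i j) = (A ^ d) i j := by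
  simp [geomPowerSeries]

theorem geomPowerSeries_mul_one_sub_X_smul (A : Matrix n n R) :
    A.geomPowerSeries * (1 - (X : R⟦X⟧) • A.map C) = 1 := by
  have coeff_mul_map_C : ∀ i j d,
      coeff d ((A.geomPowerSeries * A.map C) i j) = (A ^ (d + 1)) i j := by
    intro i j d
    simp [mul_apply, map_sum, coeff_mul_C, pow_succ]
  rw [Matrix.mul_sub, Matrix.mul_one, Matrix.mul_smul]
  ext i j (_ | d)
  all_goals
    simp only [sub_apply, smul_apply, smul_eq_mul, map_sub, coeff_zero_X_mul, coeff_succ_X_mul,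
      coeff_mul_map_C, coeff_geomPowerSeries_apply, pow_zero, sub_zero, sub_self, one_apply]
    split_ifs <;> simp

theorem adjugate_one_sub_X_smul (A : Matrix n n R) :
    (1 - (X : R⟦X⟧) • A.map C).adjugate = (1 - (X : R⟦X⟧) • A.map C).det • A.geomPowerSeries := by
  set B := 1 - (X : R⟦X⟧) • A.map C
  calc B.adjugate = (A.geomPowerSeries * B) * B.adjugate := by
        rw [geomPowerSeries_mul_one_sub_X_smul, Matrix.one_mul]
    _ = B.det • A.geomPowerSeries := by
        rw [Matrix.mul_assoc, mul_adjugate, Matrix.mul_smul, Matrix.mul_one]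

theorem det_one_sub_X_smul_submatrix_ne (A : Matrix n n R) (u : n) :
    (1 - (X : R⟦X⟧) • (A.map C).submatrix (fun v : {v : n // v ≠ u} => (v : n))
        (fun v : {v : n // v ≠ u} => (v : n))).det =
      A.geomPowerSeries u u * (1 - (X : R⟦X⟧) • A.map C).det := by
  have minor : 1 - (X : R⟦X⟧) • (A.map C).submatrix (fun v : {v : n // v ≠ u} => (v : n))
      (fun v : {v : n // v ≠ u} => (v : n)) = (1 - (X : R⟦X⟧) • A.map C).submatrix
        (fun v : {v : n // v ≠ u} => (v : n)) (fun v : {v : n // v ≠ u} => (v : n)) := by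
    ext v w
    simp [one_apply, Subtype.ext_iff]
  rw [minor, ← adjugate_apply_self_eq_det_submatrix, adjugate_one_sub_X_smul, smul_apply,
    smul_eq_mul, mul_comm]

end Matrix

namespace SimpleGraph

variable {V : Type*} (G : SimpleGraph V) [DecidableRel G.Adj]

theorem map_adjMatrix {α β : Type*} [NonAssocSemiring α] [NonAssocSemiring β] (f : α →+* β) :
    (G.adjMatrix α).map f = G.adjMatrix β := by
  ext v w
  by_cases h : G.Adj v w <;> simp [h]

theorem coeff_geomPowerSeries_adjMatrix [Fintype V] [DecidableEq V] (R : Type*) [CommRing R]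
    (u v : V) (d : ℕ) :
    coeff d ((G.adjMatrix R).geomPowerSeries u v) = Nat.card {p : G.Walk u v // p.length = d} := by
  rw [coeff_geomPowerSeries_apply, adjMatrix_pow_apply_eq_card_walk, Nat.card_eq_fintype_card]
  rfl

end SimpleGraph

/-- Jacobi's identity.  For a finite simple graph `G` with adjacency
matrix `A_G` over `ℚ` and a vertex `u`, in `ℚ⟦t⟧` we have
`(∑_{d≥0} w_d^u t^d) · det(1 - t·A_G) = det(1 - t·A_{G-u})`, where `w_d^u` is the number
of closed walks of length `d` at `u` and `A_{G-u}` is the adjacency matrix of the induced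
subgraph on `V(G) \ {u}`. -/
theorem stmt_0 {V : Type} [Fintype V] [DecidableEq V]
    (G : SimpleGraph V) [DecidableRel G.Adj] (u : V) :
    (PowerSeries.mk fun d : ℕ => (Nat.card {p : G.Walk u u // p.length = d} : ℚ)) *
      (1 - (PowerSeries.X : PowerSeries ℚ) • G.adjMatrix (PowerSeries ℚ)).det =
      (1 - (PowerSeries.X : PowerSeries ℚ) •
          (G.adjMatrix (PowerSeries ℚ)).submatrix
            (fun v : {v : V // v ≠ u} => (v : V))
            (fun v : {v : V // v ≠ u} => (v : V))).det := by
  have walk_series : (mk fun d => (Nat.card {p : G.Walk u u // p.length = d} : ℚ)) =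
      (G.adjMatrix ℚ).geomPowerSeries u u := by
    ext d
    rw [coeff_mk, G.coeff_geomPowerSeries_adjMatrix]
  rw [walk_series, ← G.map_adjMatrix C, det_one_sub_X_smul_submatrix_ne]
end

section
/- Let B be a set with a reflexive symmetric relation R, and let H = (Ω, ≤, ℓ) be a finite heap over (B, R). Fix ω ∈ Ω, let Ω₁ = {x ∈ Ω : x ≤ ω} and Ω₂ = Ω \ Ω₁. Then: (1) Ω₁, with the restricted order and labeling, is a pyramid whose unique maximal element is ω; (2) the maximal elements of Ω₂ (with the restricted order) are exactly the maximal elements of Ω other than ω; (3) the partial order ≤ on Ω coincides with the reflexive–transitive closure of the union of the three relations: ≤ restricted to Ω₁, ≤ restricted to Ω₂, and {(x, y) : x ∈ Ω₁, y ∈ Ω₂, ℓ(x) R ℓ(y)}; that is, H equals the composition H₁ ∘ H₂ of the down-set heap H₁ = (Ω₁, ≤, ℓ) and the complementary heap H₂ = (Ω₂, ≤, ℓ). -/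
/-!
Covers inside `Ω₁ = {x ≤ ω}` and inside its complement `Ω₂` (an upper set) are covers of `Ω`,
which gives the heap axioms for both pieces, and the maximal elements of the upper set `Ω₂`
are maximal in `Ω`. For the composition, every cover `a ⋖ b` of `Ω` is a step of one of the
three kinds (a cover from `Ω₁` to `Ω₂` has concurrent labels), while every step of the third
kind goes upwards because concurrent labels force comparability and `Ω₂` is an upper set.
Since a finite order is generated by its covers, the two orders agree.
-/

section Order

variable {α : Type*} [PartialOrder α]

theorem CovBy.coe_of_ordConnected {p : α → Prop} (hp : {x | p x}.OrdConnected)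
    {x y : Subtype p} (h : x ⋖ y) : (x : α) ⋖ y :=
  h.image (OrderEmbedding.subtype p) (by simpa using hp)

theorem isMax_subtype_le_iff {a : α} {x : {z // z ≤ a}} : IsMax x ↔ (x : α) = a :=
  ⟨fun h => le_antisymm x.2 (h (b := ⟨a, le_rfl⟩) x.2), fun hx b _ => b.2.trans_eq hx.symm⟩

theorem IsUpperSet.isMax_subtype_iff {p : α → Prop} (hp : IsUpperSet {x | p x})
    {x : Subtype p} : IsMax x ↔ IsMax (x : α) :=
  ⟨fun h b hb => h (b := ⟨b, hp hb x.2⟩) hb, fun h _ hb => h hb⟩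

theorem isUpperSet_not_le (a : α) : IsUpperSet {z : α | ¬ z ≤ a} :=
  fun _ _ hxy hx hy => hx (hxy.trans hy)

theorem exists_isMax_subtype_not_le_iff {a y : α} :
    (∃ h : ¬ y ≤ a, IsMax (⟨y, h⟩ : {z // ¬ z ≤ a})) ↔ IsMax y ∧ y ≠ a := by
  simp only [(isUpperSet_not_le a).isMax_subtype_iff]
  refine ⟨fun ⟨hy, hmax⟩ => ⟨hmax, fun h => hy h.le⟩, fun ⟨hmax, hne⟩ => ⟨?_, hmax⟩⟩
  exact fun h => hne (hmax.eq_of_le h)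

theorem le_iff_reflTransGen_of_covBy_le [LocallyFiniteOrder α] {r : α → α → Prop}
    (hcov : ∀ a b, a ⋖ b → r a b) (hle : ∀ a b, r a b → a ≤ b) {x y : α} :
    x ≤ y ↔ Relation.ReflTransGen r x y := by
  refine ⟨fun h => ?_, fun h => ?_⟩
  · exact Relation.ReflTransGen.mono hcov _ _ (le_iff_reflTransGen_covBy.mp h)
  · simpa [Relation.reflTransGen_eq_self] using Relation.ReflTransGen.mono hle _ _ h

end Order

theorem stmt_4_general {B Ω : Type} [Fintype Ω] [PartialOrder Ω]
    (R : B → B → Prop)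
    (ℓ : Ω → B)
    (heap1 : ∀ x y : Ω, R (ℓ x) (ℓ y) → x ≤ y ∨ y ≤ x)
    (heap2 : ∀ x y : Ω, x ⋖ y → R (ℓ x) (ℓ y))
    (ω : Ω) :
    -- (1) : the down-set of ω is a pyramid with unique maximal element ω
    ((∀ x y : {z : Ω // z ≤ ω}, x ⋖ y → R (ℓ x.1) (ℓ y.1)) ∧
      (∀ x : {z : Ω // z ≤ ω}, IsMax x ↔ x.1 = ω)) ∧
    -- (2) : the complement is a heap whose maximal elements are those of Ω other than ω
    ((∀ x y : {z : Ω // ¬ z ≤ ω}, x ⋖ y → R (ℓ x.1) (ℓ y.1)) ∧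
      (∀ y : Ω, (∃ h : ¬ y ≤ ω, IsMax (⟨y, h⟩ : {z : Ω // ¬ z ≤ ω})) ↔
        (IsMax y ∧ y ≠ ω))) ∧
    -- (3) : the order of H is recovered as the composition H₁ ∘ H₂
    (∀ x y : Ω, x ≤ y ↔
      Relation.ReflTransGen (fun a b =>
        (a ≤ ω ∧ b ≤ ω ∧ a ≤ b) ∨
        (¬ a ≤ ω ∧ ¬ b ≤ ω ∧ a ≤ b) ∨
        (a ≤ ω ∧ ¬ b ≤ ω ∧ R (ℓ a) (ℓ b))) x y) := by
  classical
  let := Fintype.toLocallyFiniteOrder (α := Ω)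
  refine ⟨⟨fun _ _ h => heap2 _ _ (h.coe_of_ordConnected Set.ordConnected_Iic),
      fun _ => isMax_subtype_le_iff⟩,
    ⟨fun _ _ h => heap2 _ _ (h.coe_of_ordConnected (isUpperSet_not_le ω).ordConnected),
      fun _ => exists_isMax_subtype_not_le_iff⟩,
    fun _ _ => le_iff_reflTransGen_of_covBy_le ?covBy_step ?step_le⟩
  case covBy_step =>
    intro a b hab
    by_cases hb : b ≤ ω
    · exact Or.inl ⟨hab.le.trans hb, hb, hab.le⟩
    by_cases ha : a ≤ ω
    · exact Or.inr (Or.inr ⟨ha, hb, heap2 a b hab⟩)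
    · exact Or.inr (Or.inl ⟨ha, hb, hab.le⟩)
  case step_le =>
    rintro a b (⟨-, -, hab⟩ | ⟨-, -, hab⟩ | ⟨ha, hb, hR⟩)
    · exact hab
    · exact hab
    · exact (heap1 a b hR).resolve_right fun hba => hb (hba.trans ha)

/-- Let `B` be a set of pieces with a reflexive symmetric concurrence
relation `R`, and let `H = (Ω, ≤, ℓ)` be a finite heap over `(B, R)`.  Fix `ω ∈ Ω`, and
let `Ω₁ = {x : x ≤ ω}`, `Ω₂ = Ω \ Ω₁`.  Then:
(1) `Ω₁` with the restricted order and labeling is a pyramid whose unique maximal element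
is `ω`;
(2) the restriction to `Ω₂` is a heap whose maximal elements are exactly the maximal
elements of `Ω` other than `ω`;
(3) `≤` on `Ω` is the reflexive–transitive closure of the union of `≤` restricted to
`Ω₁`, `≤` restricted to `Ω₂`, and `{(x,y) : x ∈ Ω₁, y ∈ Ω₂, ℓ(x) R ℓ(y)}`; i.e.
`H = H₁ ∘ H₂`. -/
theorem stmt_4 {B Ω : Type} [Fintype Ω] [PartialOrder Ω]
    (R : B → B → Prop) (hRrefl : ∀ b, R b b) (hRsymm : ∀ b c, R b c → R c b)
    (ℓ : Ω → B)
    (heap1 : ∀ x y : Ω, R (ℓ x) (ℓ y) → x ≤ y ∨ y ≤ x)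
    (heap2 : ∀ x y : Ω, x ⋖ y → R (ℓ x) (ℓ y))
    (ω : Ω) :
    -- (1) : the down-set of ω is a pyramid with unique maximal element ω
    ((∀ x y : {z : Ω // z ≤ ω}, x ⋖ y → R (ℓ x.1) (ℓ y.1)) ∧
      (∀ x : {z : Ω // z ≤ ω}, IsMax x ↔ x.1 = ω)) ∧
    -- (2) : the complement is a heap whose maximal elements are those of Ω other than ω
    ((∀ x y : {z : Ω // ¬ z ≤ ω}, x ⋖ y → R (ℓ x.1) (ℓ y.1)) ∧
      (∀ y : Ω, (∃ h : ¬ y ≤ ω, IsMax (⟨y, h⟩ : {z : Ω // ¬ z ≤ ω})) ↔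
        (IsMax y ∧ y ≠ ω))) ∧
    -- (3) : the order of H is recovered as the composition H₁ ∘ H₂
    (∀ x y : Ω, x ≤ y ↔
      Relation.ReflTransGen (fun a b =>
        (a ≤ ω ∧ b ≤ ω ∧ a ≤ b) ∨
        (¬ a ≤ ω ∧ ¬ b ≤ ω ∧ a ≤ b) ∨
        (a ≤ ω ∧ ¬ b ≤ ω ∧ R (ℓ a) (ℓ b))) x y) :=
  stmt_4_general R ℓ heap1 heap2 ω
end

section
/- Let D be a multi-digraph and fix an edge e of D. The map sending each closed trail of D ending at e to its cycle sequence is injective; moreover, for every closed trail w ending at e with cycle sequence (β₁, …, β_m), the edge e belongs to the last cycle β_m. -/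
/-- `DWalkFrom ψ u v l` : the list of edges `l` forms a directed walk from `u` to `v`. -/
def DWalkFrom {V E : Type} (ψ : E → V × V) : V → V → List E → Prop
  | u, v, [] => u = v
  | u, v, e :: l => (ψ e).1 = u ∧ DWalkFrom ψ (ψ e).2 v l

/-- `DCycleSeq ψ u l L` : `L` is the cycle sequence of the closed trail with edge list
`l` based at `u`.  It is obtained recursively by splitting `l = α ++ w₁ ++ γ` where `α`
is a path from `u` (no repeated vertices) ending at the first repeated vertex `x` of the
trail, `w₁` is the first simple closed subtrail (a closed trail at `x` whose vertices
`x, y₁, …` are pairwise distinct, the internal ones being disjoint from `α`), recording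
the cycle `[w₁]` (a cycle of a digraph being determined by its edge set) and continuing
with the remainder `α ++ γ`. -/
inductive DCycleSeq {V E : Type} [DecidableEq E] (ψ : E → V × V) :
    V → List E → List (Finset E) → Prop
  | nil (u : V) : DCycleSeq ψ u [] []
  | cons (u x : V) (a w1 g : List E) (L : List (Finset E)) :
      DWalkFrom ψ u x a →
      (u :: a.map fun e => (ψ e).2).Nodup →
      w1 ≠ [] →
      DWalkFrom ψ x x w1 →
      (x :: w1.dropLast.map fun e => (ψ e).2).Nodup →
      (∀ v ∈ w1.dropLast.map fun e => (ψ e).2,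
        v ∉ (u :: a.map fun e => (ψ e).2)) →
      DCycleSeq ψ u (a ++ g) L →
      DCycleSeq ψ u (a ++ (w1 ++ g)) (w1.toFinset :: L)

/-! Removing the first cycle of a closed trail leaves a closed trail whose cycle sequence is
the rest of the sequence, so both claims go by induction along the sequence. For injectivity
the remainders agree by induction, and the first cycle fits into the common remainder at only
one place: its base vertex lies on the cycle, while the path preceding the insertion point
meets the cycle only at its own end. The cycle is then recovered from its edge set, because
its edges leave pairwise distinct vertices. The final edge lies in the last cycle because a
cycle that is not the last one is followed by more edges: otherwise the remainder would be a
path, which has no cycles. -/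

namespace DWalkFrom

variable {V E : Type} {ψ : E → V × V}

theorem append_iff {p : List E} : ∀ {u v : V} {q : List E},
    DWalkFrom ψ u v (p ++ q) ↔ ∃ w, DWalkFrom ψ u w p ∧ DWalkFrom ψ w v q := by
  induction p with
  | nil => simp [DWalkFrom]
  | cons f p ih =>
    simp only [List.cons_append, DWalkFrom, ih, and_assoc, exists_and_left, implies_true]

theorem end_unique : ∀ {l : List E} {u v v' : V},
    DWalkFrom ψ u v l → DWalkFrom ψ u v' l → v = v'
  | [], _, _, _, h, h' => h.symm.trans h'
  | _ :: _, _, _, _, h, h' => end_unique h.2 h'.2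

theorem end_mem_vertices : ∀ {l : List E} {u v : V},
    DWalkFrom ψ u v l → v ∈ u :: l.map fun f => (ψ f).2
  | [], _, _, h => by simp [h.symm]
  | _ :: _, _, _, h => List.mem_cons_of_mem _ (end_mem_vertices h.2)

theorem map_snd_eq : ∀ {l : List E} {u v : V}, DWalkFrom ψ u v l → l ≠ [] →
    l.map (fun f => (ψ f).2) = l.dropLast.map (fun f => (ψ f).2) ++ [v]
  | [], _, _, _, hne => absurd rfl hne
  | [_], _, _, h, _ => congrArg ([·]) h.2
  | f :: f' :: l, _, _, h, _ => by
    have ih := map_snd_eq h.2 (List.cons_ne_nil f' l)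
    simp only [List.map_cons, List.dropLast_cons_of_ne_nil (List.cons_ne_nil f' l),
      List.cons_append] at ih ⊢
    rw [ih]

theorem map_fst_eq : ∀ {l : List E} {u v : V}, DWalkFrom ψ u v l → l ≠ [] →
    l.map (fun f => (ψ f).1) = u :: l.dropLast.map (fun f => (ψ f).2)
  | [], _, _, _, hne => absurd rfl hne
  | [_], _, _, h, _ => congrArg ([·]) h.1
  | f :: f' :: l, _, _, h, _ => by
    have ih := map_fst_eq h.2 (List.cons_ne_nil f' l)
    simp only [List.map_cons, List.dropLast_cons_of_ne_nil (List.cons_ne_nil f' l)] at ih ⊢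
    rw [ih, h.1]

theorem eq_of_mem_iff : ∀ {w w' : List E} {y z z' : V},
    DWalkFrom ψ y z w → DWalkFrom ψ y z' w' →
    (w.map fun f => (ψ f).1).Nodup → (w'.map fun f => (ψ f).1).Nodup →
    (∀ f, f ∈ w ↔ f ∈ w') → w = w'
  | [], w', _, _, _, _, _, _, _, hmem =>
    (List.eq_nil_iff_forall_not_mem.mpr fun f hf => by simpa using (hmem f).mpr hf).symm
  | f :: t, [], _, _, _, _, _, _, _, hmem => by simpa using (hmem f).mp (by simp)
  | f :: t, f' :: t', _, _, _, h, h', hsrc, hsrc', hmem => by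
    obtain rfl : f = f' := by
      rcases List.mem_cons.mp ((hmem f').mpr (by simp)) with hf' | hf'
      · exact hf'.symm
      · refine absurd ?_ (List.nodup_cons.mp hsrc).1
        change (ψ f).1 ∈ _
        rw [h.1, ← h'.1]
        exact List.mem_map_of_mem hf'
    have htail : ∀ g, g ∈ t ↔ g ∈ t' := fun g => by
      by_cases hg : g = f
      · subst hg
        exact iff_of_false (List.nodup_cons.mp (List.Nodup.of_map _ hsrc)).1
          (List.nodup_cons.mp (List.Nodup.of_map _ hsrc')).1
      · simpa [hg] using hmem g
    rw [eq_of_mem_iff h.2 h'.2 (List.nodup_cons.mp hsrc).2 (List.nodup_cons.mp hsrc').2 htail]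

theorem length_le_of_cycle_subset {u x₁ x₂ : V} {a₁ g₁ a₂ g₂ w₁ w₂ : List E}
    (hr : a₁ ++ g₁ = a₂ ++ g₂) (k₁ : DWalkFrom ψ u x₁ a₁) (k₂ : DWalkFrom ψ u x₂ a₂)
    (p₂ : (u :: a₂.map fun f => (ψ f).2).Nodup)
    (d₂ : ∀ v ∈ w₂.dropLast.map fun f => (ψ f).2, v ∉ u :: a₂.map fun f => (ψ f).2)
    (ne₁ : w₁ ≠ []) (c₁ : DWalkFrom ψ x₁ x₁ w₁) (c₂ : DWalkFrom ψ x₂ x₂ w₂)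
    (hsub : w₁ ⊆ w₂) : a₂.length ≤ a₁.length := by
  by_contra! hlt
  obtain ⟨t, rfl⟩ : a₁ <+: a₂ := List.prefix_of_prefix_length_le ⟨g₁, hr⟩ ⟨g₂, rfl⟩ hlt.le
  have ht : t ≠ [] := by rintro rfl; simp at hlt
  obtain ⟨y, k₁', kt⟩ := append_iff.mp k₂
  obtain rfl := k₁'.end_unique k₁
  have hvert : (u :: (a₁ ++ t).map fun f => (ψ f).2) =
      (u :: a₁.map fun f => (ψ f).2) ++ t.map fun f => (ψ f).2 := by simp
  have hy : y ∈ u :: a₁.map fun f => (ψ f).2 := k₁.end_mem_vertices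
  by_cases hyx : y = x₂
  · subst hyx
    rw [hvert, List.nodup_append] at p₂
    exact p₂.2.2 y hy y (by rw [kt.map_snd_eq ht]; simp) rfl
  · obtain ⟨f, hf, hfy⟩ : ∃ f ∈ w₁, (ψ f).2 = y :=
      List.mem_map.mp (by rw [c₁.map_snd_eq ne₁]; simp)
    have hy₂ : y ∈ w₂.map fun f => (ψ f).2 := hfy ▸ List.mem_map_of_mem (hsub hf)
    rw [c₂.map_snd_eq (List.ne_nil_of_mem (hsub hf))] at hy₂
    rcases List.mem_append.mp hy₂ with hint | hend
    · exact d₂ y hint (hvert ▸ List.mem_append_left _ hy)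
    · exact hyx (List.mem_singleton.mp hend)

end DWalkFrom

namespace DCycleSeq

variable {V E : Type} [DecidableEq E] {ψ : E → V × V} {u : V} {l : List E}

theorem eq_nil (h : DCycleSeq ψ u l []) : l = [] := by
  cases h; rfl

theorem not_nodup_vertices {s : Finset E} {L : List (Finset E)}
    (h : DCycleSeq ψ u l (s :: L)) : ¬ (u :: l.map fun f => (ψ f).2).Nodup := by
  rcases h with _ | ⟨x, a, w, g, _, ha, -, hw, cw, -, -, -⟩
  intro hnd
  rw [List.map_append, List.map_append, ← List.cons_append, List.nodup_append] at hnd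
  exact hnd.2.2 x ha.end_mem_vertices x
    (List.mem_append_left _ (by rw [cw.map_snd_eq hw]; simp)) rfl

theorem exists_getLast?_mem {L : List (Finset E)} {e : E} (h : DCycleSeq ψ u l L)
    (he : l.getLast? = some e) : ∃ c, L.getLast? = some c ∧ e ∈ c := by
  induction h with
  | nil => simp at he
  | cons x a w g L _ hpath hw _ _ _ rec ih =>
    rcases L with _ | ⟨s, L⟩
    · obtain ⟨rfl, rfl⟩ := List.append_eq_nil_iff.mp rec.eq_nil
      rw [List.nil_append, List.append_nil] at he
      exact ⟨_, rfl, List.mem_toFinset.mpr (List.mem_of_getLast? he)⟩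
    · have hg : g ≠ [] := by
        rintro rfl
        exact (List.append_nil a ▸ rec).not_nodup_vertices hpath
      rw [List.getLast?_append_of_ne_nil _ (by simp [hg]), List.getLast?_append_of_ne_nil _ hg,
        ← List.getLast?_append_of_ne_nil a hg] at he
      obtain ⟨c, hc, hec⟩ := ih he
      exact ⟨c, List.getLast?_cons_cons.trans hc, hec⟩

theorem injective {L : List (Finset E)} {l₁ l₂ : List E}
    (h₁ : DCycleSeq ψ u l₁ L) (h₂ : DCycleSeq ψ u l₂ L) : l₁ = l₂ := by
  induction h₁ generalizing l₂ with
  | nil => exact h₂.eq_nil.symm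
  | cons x₁ a₁ w₁ g₁ L k₁ p₁ ne₁ c₁ s₁ d₁ _ ih =>
    generalize hL : w₁.toFinset :: L = L' at h₂
    rcases h₂ with _ | ⟨x₂, a₂, w₂, g₂, L₂, k₂, p₂, ne₂, c₂, s₂, d₂, rec₂⟩
    · cases hL
    obtain ⟨hw, rfl⟩ := List.cons.inj hL
    have hr : a₁ ++ g₁ = a₂ ++ g₂ := ih rec₂
    have hmem : ∀ f, f ∈ w₁ ↔ f ∈ w₂ := fun f => by simpa using Finset.ext_iff.mp hw f
    have hlen : a₁.length = a₂.length :=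
      le_antisymm
        (k₂.length_le_of_cycle_subset hr.symm k₁ p₁ d₁ ne₂ c₂ c₁ fun f => (hmem f).mpr)
        (k₁.length_le_of_cycle_subset hr k₂ p₂ d₂ ne₁ c₁ c₂ fun f => (hmem f).mp)
    obtain ⟨rfl, rfl⟩ := List.append_inj hr hlen
    obtain rfl := k₁.end_unique k₂
    rw [DWalkFrom.eq_of_mem_iff c₁ c₂ (by rwa [c₁.map_fst_eq ne₁]) (by rwa [c₂.map_fst_eq ne₂])
      hmem]

end DCycleSeq

theorem stmt_9_general {V E : Type} [DecidableEq E]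
    (ψ : E → V × V) (e : E) :
    (∀ (u : V) (l₁ l₂ : List E) (L : List (Finset E)),
      DWalkFrom ψ u u l₁ → l₁.Nodup → l₁.getLast? = some e →
      DWalkFrom ψ u u l₂ → l₂.Nodup → l₂.getLast? = some e →
      DCycleSeq ψ u l₁ L → DCycleSeq ψ u l₂ L → l₁ = l₂) ∧
    (∀ (u : V) (l : List E) (L : List (Finset E)),
      DWalkFrom ψ u u l → l.Nodup → l.getLast? = some e →
      DCycleSeq ψ u l L → ∃ c : Finset E, L.getLast? = some c ∧ e ∈ c) :=
  ⟨fun _ _ _ _ _ _ _ _ _ _ h₁ h₂ => h₁.injective h₂,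
    fun _ _ _ _ _ he h => h.exists_getLast?_mem he⟩

/-- Let `D` be a multi-digraph and fix an edge `e`.  The map sending
each closed trail of `D` ending at `e` to its cycle sequence is injective; moreover, for
every closed trail `w` ending at `e` with cycle sequence `(β₁, …, β_m)`, the edge `e`
belongs to the last cycle `β_m`. -/
theorem stmt_9 {V E : Type} [DecidableEq V] [DecidableEq E]
    (ψ : E → V × V) (hψ : ∀ f : E, (ψ f).1 ≠ (ψ f).2) (e : E) :
    (∀ (u : V) (l₁ l₂ : List E) (L : List (Finset E)),
      DWalkFrom ψ u u l₁ → l₁.Nodup → l₁.getLast? = some e →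
      DWalkFrom ψ u u l₂ → l₂.Nodup → l₂.getLast? = some e →
      DCycleSeq ψ u l₁ L → DCycleSeq ψ u l₂ L → l₁ = l₂) ∧
    (∀ (u : V) (l : List E) (L : List (Finset E)),
      DWalkFrom ψ u u l → l.Nodup → l.getLast? = some e →
      DCycleSeq ψ u l L → ∃ c : Finset E, L.getLast? = some c ∧ e ∈ c) :=
  stmt_9_general ψ e
end
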